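/- arXiv:2202.02607 — 4 statements merged into one kernel-verified Lean document; each statement's English description precedes it below -/
import Mathlib

section
/- Let cvr be a uniquely-labeled CVR of size S for a batch B of ballots with |B| = S, where ballot identifiers within B need not be unique. Then there exists a bijection f from rows of the CVR to ballots in B such that for every row r: if some ballot in B has identifier matching ι_r, then f(r) is a ballot with identifier ι_r minimizing W_{f(r)} − L_{f(r)} being subtracted, i.e., achieving the row discrepancy D_r = (W_r − L_r) + min({1} ∪ {−(W_b − L_b) : id_b = ι_r, b ∈ B}); and if no ballot matches ι_r, then (W_r − L_r) − (W_{f(r)} − L_{f(r)}) ≤ D_r. -/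
/-! Give every matched row a ballot with its identifier that minimises `-(W - L)`, and every
other row an arbitrary ballot of `B`. As the CVR is uniquely labeled, distinct matched rows get
ballots with distinct identifiers, so this choice is injective on the matched rows and, since
`|B| = S`, extends to a bijection. A matched row then attains its discrepancy exactly; on an
unmatched row the discrepancy is `(W_r - L_r) + 1`, and `-(W_b - L_b) ≤ 1` for every ballot. -/

namespace Finset

variable {α β : Type*} [LinearOrder β]

theorem exists_mem_forall_le_of_filter_nonempty {s : Finset α} (hs : s.Nonempty)
    (p : α → Prop) [DecidablePred p] (φ : α → β) :
    ∃ a ∈ s, (s.filter p).Nonempty → a ∈ s.filter p ∧ ∀ a' ∈ s.filter p, φ a ≤ φ a' := by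
  by_cases hp : (s.filter p).Nonempty
  · obtain ⟨a, ha, hmin⟩ := exists_min_image _ φ hp
    exact ⟨a, (mem_filter.1 ha).1, fun _ => ⟨ha, hmin⟩⟩
  · obtain ⟨a, ha⟩ := hs
    exact ⟨a, ha, fun h => absurd h hp⟩

theorem min'_insert_image_eq {t : Finset α} {φ : α → β} {a : α} {c : β} (ha : a ∈ t)
    (hmin : ∀ a' ∈ t, φ a ≤ φ a') (hc : φ a ≤ c) :
    (insert c (t.image φ)).min' (insert_nonempty _ _) = φ a :=
  le_antisymm (min'_le _ _ (mem_insert_of_mem (mem_image_of_mem φ ha)))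
    (le_min' _ _ _ (by simpa using ⟨hc, hmin⟩))

end Finset

open Finset in
theorem exists_pessimal_bijection_general
    {Ballot I : Type*} [DecidableEq Ballot] [DecidableEq I]
    (S : ℕ) (B : Finset Ballot) (hcard : B.card = S)
    (id_ : Ballot → I) (W L : Ballot → ℤ)
    (hW : ∀ b, W b ∈ ({0, 1} : Set ℤ)) (hL : ∀ b, L b ∈ ({0, 1} : Set ℤ))
    (ι : Fin S → I) (hinj : Function.Injective ι)
    (Wr Lr : Fin S → ℤ)
    (D : Fin S → ℤ)
    (hD : ∀ r, D r = (Wr r - Lr r) +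
      (insert (1 : ℤ)
        ((B.filter (fun b => id_ b = ι r)).image (fun b => -(W b - L b)))).min'
        (Finset.insert_nonempty _ _)) :
    ∃ f : Fin S ≃ {b // b ∈ B},
      ∀ r : Fin S,
        ((∃ b ∈ B, id_ b = ι r) →
          id_ (f r).1 = ι r ∧ (Wr r - Lr r) - (W (f r).1 - L (f r).1) = D r) ∧
        ((¬ ∃ b ∈ B, id_ b = ι r) →
          (Wr r - Lr r) - (W (f r).1 - L (f r).1) ≤ D r) := by
  have hle_one : ∀ b, -(W b - L b) ≤ 1 := fun b => by
    have hw := hW b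
    have hl := hL b
    simp only [Set.mem_insert_iff, Set.mem_singleton_iff] at hw hl
    omega
  choose g hgB hg using fun r : Fin S =>
    exists_mem_forall_le_of_filter_nonempty (card_pos.1 (hcard ▸ r.pos))
      (fun b => id_ b = ι r) (fun b => -(W b - L b))
  have hmatched : ∀ r, (∃ b ∈ B, id_ b = ι r) → (B.filter (fun b => id_ b = ι r)).Nonempty :=
    fun r ⟨b, hb, hid⟩ => ⟨b, mem_filter.2 ⟨hb, hid⟩⟩
  have hgid : ∀ r, (∃ b ∈ B, id_ b = ι r) → id_ (g r) = ι r :=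
    fun r hr => (mem_filter.1 (hg r (hmatched r hr)).1).2
  obtain ⟨f, hf⟩ := Set.MapsTo.exists_equiv_extend_of_card_eq (s := {r | ∃ b ∈ B, id_ b = ι r})
    (by simp [hcard]) (fun r _ => hgB r)
    (fun r₁ hr₁ r₂ hr₂ h => hinj (by rw [← hgid r₁ hr₁, ← hgid r₂ hr₂, h]))
  refine ⟨f, fun r => ⟨fun hr => ?_, fun hr => ?_⟩⟩
  · obtain ⟨hmem, hmin⟩ := hg r (hmatched r hr)
    rw [hf r hr, hD r, min'_insert_image_eq hmem hmin (hle_one (g r))]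
    exact ⟨hgid r hr, by ring⟩
  · have hempty : B.filter (fun b => id_ b = ι r) = ∅ :=
      filter_eq_empty_iff.2 fun b hb hid => hr ⟨b, hb, hid⟩
    simp only [hD r, hempty, image_empty, insert_empty, min'_singleton]
    linarith [hle_one (f r)]

/-- For a uniquely-labeled CVR of size `S` over a batch `B` of exactly `S` ballots (whose
identifiers need not be unique), there is a bijection `f` from rows to ballots such that:
for every row matched by some ballot, `f r` is a matching ballot achieving the row
discrepancy `D r`; and for every unmatched row, the assigned discrepancy is at most `D r`. -/
theorem exists_pessimal_bijection
    {Ballot I : Type*} [DecidableEq Ballot] [DecidableEq I]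
    (S : ℕ) (B : Finset Ballot) (hcard : B.card = S)
    (id_ : Ballot → I) (W L : Ballot → ℤ)
    (hW : ∀ b, W b ∈ ({0, 1} : Set ℤ)) (hL : ∀ b, L b ∈ ({0, 1} : Set ℤ))
    (ι : Fin S → I) (hinj : Function.Injective ι)
    (Wr Lr : Fin S → ℤ)
    (hWr : ∀ r, Wr r ∈ ({0, 1} : Set ℤ)) (hLr : ∀ r, Lr r ∈ ({0, 1} : Set ℤ))
    (D : Fin S → ℤ)
    (hD : ∀ r, D r = (Wr r - Lr r) +
      (insert (1 : ℤ)
        ((B.filter (fun b => id_ b = ι r)).image (fun b => -(W b - L b)))).min'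
        (Finset.insert_nonempty _ _)) :
    ∃ f : Fin S ≃ {b // b ∈ B},
      ∀ r : Fin S,
        ((∃ b ∈ B, id_ b = ι r) →
          id_ (f r).1 = ι r ∧ (Wr r - Lr r) - (W (f r).1 - L (f r).1) = D r) ∧
        ((¬ ∃ b ∈ B, id_ b = ι r) →
          (Wr r - Lr r) - (W (f r).1 - L (f r).1) ≤ D r) :=
  exists_pessimal_bijection_general S B hcard id_ W L hW hL ι hinj Wr Lr D hD
end

section
/- Let D_1, D_2, ... be random variables taking values in {−2,−1,0,1,2} that are δ-dominating for some 0 < δ ≤ 2, and let γ > 1. Define Risk_ℓ = ∏_{i=1}^ℓ (1 − δ/(2γ))/(1 − D_i/(2γ)). Then for any stopping time τ (adapted to the D_i) and any α ∈ (0,1], Pr[Risk_τ ≤ α] ≤ α. -/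
/-!
Put `c = 1 - δ/(2γ)`. As `|D_i| ≤ 2 < 2γ`, the factors `(1 - D_i/(2γ))/c` are positive and
bounded, and δ-domination says precisely that each has conditional expectation at most `1` given
the past. Their running product `M_n = 1/Risk_n` is therefore a nonnegative supermartingale with
`M_0 = 1`, and `Risk_τ ≤ α` means `M_τ ≥ 1/α`. Optional stopping at the bounded times `min τ n`
and Markov's inequality give `Pr[M_{min τ n} ≥ 1/α] ≤ α`; letting `n → ∞` gives the claim
(Ville's inequality).
-/

open MeasureTheory Finset

/-- The natural filtration: the σ-algebra generated by `D 0, …, D (t-1)`. -/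
noncomputable def natFiltration {Ω : Type*} (D : ℕ → Ω → ℝ) (t : ℕ) : MeasurableSpace Ω :=
  ⨆ i ∈ Finset.range t, MeasurableSpace.comap (D i) inferInstance

section NatFiltration

variable {Ω : Type*} {D : ℕ → Ω → ℝ}

theorem natFiltration_mono : Monotone (natFiltration D) :=
  fun _ _ hst => biSup_mono fun _ hi => mem_range.2 ((mem_range.1 hi).trans_le hst)

theorem natFiltration_le [m0 : MeasurableSpace Ω] (hD : ∀ t, Measurable (D t)) (t : ℕ) :
    natFiltration D t ≤ m0 :=
  iSup₂_le fun i _ => (hD i).comap_le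

theorem measurable_natFiltration {i t : ℕ} (hit : i < t) : Measurable[natFiltration D t] (D i) :=
  Measurable.of_comap_le (le_iSup₂_of_le i (mem_range.2 hit) le_rfl)

noncomputable def natFiltration.filtration [m0 : MeasurableSpace Ω] (hD : ∀ t, Measurable (D t)) :
    Filtration ℕ m0 :=
  ⟨natFiltration D, natFiltration_mono, natFiltration_le hD⟩

end NatFiltration

section Supermartingale

variable {Ω : Type*} {m m0 : MeasurableSpace Ω} {μ : Measure Ω} [IsFiniteMeasure μ]

theorem condExp_const_sub_mul_le (hm : m ≤ m0) {X : Ω → ℝ} (hX : Integrable X μ) {a b δ : ℝ}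
    (hb : 0 ≤ b) (hδ : ∀ᵐ ω ∂μ, δ ≤ μ[X | m] ω) :
    μ[fun ω => a - b * X ω | m] ≤ᵐ[μ] fun _ => a - b * δ := by
  have hlin : μ[fun ω => a - b * X ω | m] =ᵐ[μ] fun ω => a - b * μ[X | m] ω := by
    refine (condExp_sub (integrable_const a) (hX.const_mul b) m).trans ?_
    rw [condExp_const hm]
    filter_upwards [condExp_smul (μ := μ) b X m] with ω hω
    simp only [Pi.sub_apply]
    exact congrArg (a - ·) hω
  filter_upwards [hlin, hδ] with ω hω hδω
  rw [hω]
  exact sub_le_sub_left (mul_le_mul_of_nonneg_left hδω hb) a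

variable {ℱ : Filtration ℕ m0}

theorem supermartingale_prod_range {X : ℕ → Ω → ℝ} {C : ℝ}
    (hX : ∀ i, Measurable[ℱ (i + 1)] (X i)) (hX0 : ∀ i ω, 0 ≤ X i ω) (hXC : ∀ i ω, X i ω ≤ C)
    (hcond : ∀ i, μ[X i | ℱ i] ≤ᵐ[μ] 1) :
    Supermartingale (fun n ω => ∏ i ∈ range n, X i ω) ℱ μ := by
  set M : ℕ → Ω → ℝ := fun n ω => ∏ i ∈ range n, X i ω
  have hM0 : ∀ n ω, 0 ≤ M n ω := fun n ω => prod_nonneg fun i _ => hX0 i ω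
  have hmeas : ∀ n, Measurable[ℱ n] (M n) := fun n =>
    measurable_prod _ fun i hi => (hX i).mono (ℱ.mono (mem_range.1 hi)) le_rfl
  have hint : ∀ n, Integrable (M n) μ := fun n =>
    .of_bound ((hmeas n).mono (ℱ.le n) le_rfl).aestronglyMeasurable (C ^ n) <|
      .of_forall fun ω => by
        rw [Real.norm_of_nonneg (hM0 n ω)]
        exact (prod_le_prod (fun i _ => hX0 i ω) fun i _ => hXC i ω).trans_eq (by simp)
  have hXint : ∀ i, Integrable (X i) μ := fun i =>
    .of_bound ((hX i).mono (ℱ.le _) le_rfl).aestronglyMeasurable C <|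
      .of_forall fun ω => (Real.norm_of_nonneg (hX0 i ω)).trans_le (hXC i ω)
  refine supermartingale_nat (fun n => (hmeas n).stronglyMeasurable) hint fun n => ?_
  have hsucc : M (n + 1) = M n * X n := funext fun ω => prod_range_succ _ _
  have hpull : μ[M (n + 1) | ℱ n] =ᵐ[μ] M n * μ[X n | ℱ n] := by
    rw [hsucc]
    exact condExp_mul_of_stronglyMeasurable_left (hmeas n).stronglyMeasurable
      (hsucc ▸ hint (n + 1)) (hXint n)
  filter_upwards [hpull, hcond n] with ω hω hcondω
  rw [hω, Pi.mul_apply]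
  exact mul_le_of_le_one_right (hM0 n ω) hcondω

theorem MeasureTheory.Supermartingale.integral_stoppedValue_le_integral_zero {M : ℕ → Ω → ℝ}
    (hM : Supermartingale M ℱ μ) {τ : Ω → WithTop ℕ} (hτ : IsStoppingTime ℱ τ) {N : ℕ}
    (hbdd : ∀ ω, τ ω ≤ N) :
    ∫ ω, stoppedValue M τ ω ∂μ ≤ ∫ ω, M 0 ω ∂μ := by
  have := hM.neg.expected_stoppedValue_mono (isStoppingTime_const ℱ 0) hτ
    (fun _ => bot_le) hbdd
  simpa [stoppedValue, integral_neg] using this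

theorem MeasureTheory.Supermartingale.measure_ge_stoppedValue_le {M : ℕ → Ω → ℝ}
    (hM : Supermartingale M ℱ μ) (hM0 : 0 ≤ M) {τ : Ω → WithTop ℕ} (hτ : IsStoppingTime ℱ τ)
    {N : ℕ} (hbdd : ∀ ω, τ ω ≤ N) {ε : ℝ} (hε : 0 < ε) :
    μ {ω | ε ≤ stoppedValue M τ ω} ≤ ENNReal.ofReal ((∫ ω, M 0 ω ∂μ) / ε) := by
  rw [← ofReal_measureReal]
  refine ENNReal.ofReal_le_ofReal ((le_div_iff₀' hε).2 ?_)
  calc ε * μ.real {ω | ε ≤ stoppedValue M τ ω}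
      ≤ ∫ ω, stoppedValue M τ ω ∂μ :=
        mul_meas_ge_le_integral_of_nonneg (.of_forall fun ω => hM0 _ ω)
          (integrable_stoppedValue ℕ hτ hM.integrable hbdd) ε
    _ ≤ ∫ ω, M 0 ω ∂μ := hM.integral_stoppedValue_le_integral_zero hτ hbdd

theorem MeasureTheory.Supermartingale.measure_ge_apply_stoppingTime_le {M : ℕ → Ω → ℝ}
    (hM : Supermartingale M ℱ μ) (hM0 : 0 ≤ M) {τ : Ω → ℕ}
    (hτ : IsStoppingTime ℱ fun ω => (τ ω : WithTop ℕ)) {ε : ℝ} (hε : 0 < ε) :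
    μ {ω | ε ≤ M (τ ω) ω} ≤ ENNReal.ofReal ((∫ ω, M 0 ω ∂μ) / ε) := by
  set S := {ω | ε ≤ M (τ ω) ω}
  have hS : S = ⋃ n : ℕ, S ∩ {ω | τ ω ≤ n} := by
    ext ω
    simpa using fun _ => ⟨τ ω, le_rfl⟩
  have hmono : Monotone fun n : ℕ => S ∩ {ω | τ ω ≤ n} := fun a b hab =>
    Set.inter_subset_inter_right _ fun ω hω => le_trans hω hab
  have hstopped : ∀ n : ℕ,
      S ∩ {ω | τ ω ≤ n} ⊆ {ω | ε ≤ stoppedValue M (fun ω => min (τ ω : WithTop ℕ) n) ω} := by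
    rintro n ω ⟨hεω : ε ≤ M (τ ω) ω, hτω : τ ω ≤ n⟩
    have hmin : min (τ ω : WithTop ℕ) n = τ ω := min_eq_left (WithTop.coe_le_coe.2 hτω)
    show ε ≤ M (min (τ ω : WithTop ℕ) n).untopA ω
    rw [hmin]
    exact hεω
  rw [hS, hmono.measure_iUnion]
  exact iSup_le fun n => (measure_mono (hstopped n)).trans <|
    hM.measure_ge_stoppedValue_le hM0 (hτ.min_const n) (fun _ => min_le_right _ _) hε

end Supermartingale

section KaplanMarkov

noncomputable def kmFactor (δ γ d : ℝ) : ℝ := (1 - d / (2 * γ)) / (1 - δ / (2 * γ))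

variable {δ γ : ℝ}

theorem measurable_kmFactor (δ γ : ℝ) : Measurable (kmFactor δ γ) := by
  unfold kmFactor
  fun_prop

theorem one_sub_div_pos_of_lt {a b : ℝ} (hb : 0 < b) (hab : a < b) : 0 < 1 - a / b :=
  sub_pos.2 ((div_lt_one hb).2 hab)

theorem kmFactor_pos (hγ : 0 < γ) (hδ : δ < 2 * γ) {d : ℝ} (hd : d < 2 * γ) :
    0 < kmFactor δ γ d :=
  div_pos (one_sub_div_pos_of_lt (by positivity) hd) (one_sub_div_pos_of_lt (by positivity) hδ)

theorem kmFactor_antitone (hγ : 0 < γ) (hδ : δ < 2 * γ) : Antitone (kmFactor δ γ) :=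
  fun _ _ hab =>
    div_le_div_of_nonneg_right (by gcongr) (one_sub_div_pos_of_lt (by positivity) hδ).le

theorem inv_prod_kmFactor {ι : Type*} (s : Finset ι) (d : ι → ℝ) :
    (∏ i ∈ s, kmFactor δ γ (d i))⁻¹ = ∏ i ∈ s, (1 - δ / (2 * γ)) / (1 - d i / (2 * γ)) := by
  simp only [← prod_inv_distrib, kmFactor, inv_div]

theorem condExp_kmFactor_le_one {Ω : Type*} {m m0 : MeasurableSpace Ω} {μ : Measure Ω}
    [IsFiniteMeasure μ] (hm : m ≤ m0) {X : Ω → ℝ} (hX : Integrable X μ) (hγ : 0 < γ)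
    (hδ : δ < 2 * γ) (hdom : ∀ᵐ ω ∂μ, δ ≤ μ[X | m] ω) :
    μ[fun ω => kmFactor δ γ (X ω) | m] ≤ᵐ[μ] 1 := by
  set c := 1 - δ / (2 * γ)
  have hc : 0 < c := one_sub_div_pos_of_lt (by positivity) hδ
  have haffine : (fun ω => kmFactor δ γ (X ω)) = fun ω => c⁻¹ - c⁻¹ / (2 * γ) * X ω := by
    funext ω
    unfold kmFactor
    ring
  have hone : c⁻¹ - c⁻¹ / (2 * γ) * δ = 1 :=
    calc c⁻¹ - c⁻¹ / (2 * γ) * δ = c⁻¹ * (1 - δ / (2 * γ)) := by ring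
      _ = 1 := inv_mul_cancel₀ hc.ne'
  have := condExp_const_sub_mul_le (a := c⁻¹) hm hX (b := c⁻¹ / (2 * γ)) (by positivity) hdom
  rwa [← haffine, hone] at this

end KaplanMarkov

theorem kaplan_markov_test_risk_general
    {Ω : Type*} [MeasurableSpace Ω] (μ : Measure Ω) [IsProbabilityMeasure μ]
    (D : ℕ → Ω → ℝ) (hmeas : ∀ t, Measurable (D t))
    (hrange : ∀ t ω, D t ω ∈ ({-2, -1, 0, 1, 2} : Set ℝ))
    (δ γ : ℝ) (hδ2 : δ ≤ 2) (hγ : 1 < γ)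
    (hdom : ∀ t, ∀ᵐ ω ∂μ, δ ≤ (μ[D t | natFiltration D t]) ω)
    (τ : Ω → ℕ)
    (hτ : ∀ n, MeasurableSet[natFiltration D n] {ω | τ ω = n})
    (α : ℝ) (hα0 : 0 < α) :
    μ {ω | ∏ i ∈ Finset.range (τ ω), (1 - δ / (2 * γ)) / (1 - D i ω / (2 * γ)) ≤ α} ≤
      ENNReal.ofReal α := by
  have hγ0 : 0 < γ := by linarith
  have hδγ : δ < 2 * γ := by linarith
  have hD : ∀ t ω, |D t ω| ≤ 2 := fun t ω => by
    have h := hrange t ω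
    simp only [Set.mem_insert_iff, Set.mem_singleton_iff] at h
    rcases h with h | h | h | h | h <;> rw [h] <;> norm_num
  have hpos : ∀ t ω, 0 < kmFactor δ γ (D t ω) := fun t ω =>
    kmFactor_pos hγ0 hδγ (by linarith [(abs_le.1 (hD t ω)).2])
  set M : ℕ → Ω → ℝ := fun n ω => ∏ i ∈ range n, kmFactor δ γ (D i ω)
  set ℱ := natFiltration.filtration hmeas
  have hM : Supermartingale M ℱ μ :=
    supermartingale_prod_range (C := kmFactor δ γ (-2))
      (fun i => (measurable_kmFactor δ γ).comp (measurable_natFiltration (Nat.lt_succ_self i)))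
      (fun i ω => (hpos i ω).le)
      (fun i ω => kmFactor_antitone hγ0 hδγ (abs_le.1 (hD i ω)).1)
      fun i => condExp_kmFactor_le_one (natFiltration_le hmeas i)
        (.of_bound (hmeas i).aestronglyMeasurable 2 (.of_forall (hD i))) hγ0 hδγ (hdom i)
  have hτ' : IsStoppingTime ℱ fun ω => (τ ω : WithTop ℕ) :=
    isStoppingTime_of_measurableSet_eq fun n => by
      simp only [Nat.cast_withTop, WithTop.coe_inj]
      exact hτ n
  have hevent : {ω | ∏ i ∈ range (τ ω), (1 - δ / (2 * γ)) / (1 - D i ω / (2 * γ)) ≤ α} ⊆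
      {ω | α⁻¹ ≤ M (τ ω) ω} := fun ω hω =>
    inv_le_of_inv_le₀ (prod_pos fun i _ => hpos i ω) ((inv_prod_kmFactor _ _).trans_le hω)
  calc _ ≤ μ {ω | α⁻¹ ≤ M (τ ω) ω} := measure_mono hevent
    _ ≤ ENNReal.ofReal ((∫ ω, M 0 ω ∂μ) / α⁻¹) :=
      hM.measure_ge_apply_stoppingTime_le (fun n ω => prod_nonneg fun i _ => (hpos i ω).le) hτ'
        (inv_pos.2 hα0)
    _ = ENNReal.ofReal α := by simp [M]

/-- Kaplan–Markov test validity for δ-dominating discrepancy sequences: if the `D t` take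
values in `{−2,−1,0,1,2}`, are `δ`-dominating with `0 < δ ≤ 2`, `γ > 1`, and `τ` is a
stopping time adapted to the `D t`, then for any `α ∈ (0,1]`,
`Pr[ ∏_{i<τ} (1 − δ/(2γ))/(1 − D i/(2γ)) ≤ α ] ≤ α`. -/
theorem kaplan_markov_test_risk
    {Ω : Type*} [MeasurableSpace Ω] (μ : Measure Ω) [IsProbabilityMeasure μ]
    (D : ℕ → Ω → ℝ) (hmeas : ∀ t, Measurable (D t))
    (hrange : ∀ t ω, D t ω ∈ ({-2, -1, 0, 1, 2} : Set ℝ))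
    (δ γ : ℝ) (hδ0 : 0 < δ) (hδ2 : δ ≤ 2) (hγ : 1 < γ)
    (hdom : ∀ t, ∀ᵐ ω ∂μ, δ ≤ (μ[D t | natFiltration D t]) ω)
    (τ : Ω → ℕ)
    (hτ : ∀ n, MeasurableSet[natFiltration D n] {ω | τ ω = n})
    (α : ℝ) (hα0 : 0 < α) (hα1 : α ≤ 1) :
    μ {ω | ∏ i ∈ Finset.range (τ ω), (1 - δ / (2 * γ)) / (1 - D i ω / (2 * γ)) ≤ α} ≤
      ENNReal.ofReal α :=
  kaplan_markov_test_risk_general μ D hmeas hrange δ γ hδ2 hγ hdom τ hτ α hα0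
end

section
/- In the group comparison audit: suppose batch β of size S_β is partitioned by the adversary into ν groups with declared sizes S_1,...,S_ν summing to S_β, declared group totals (W^cvr_g, L^cvr_g) summing to the tabulated totals (W^tab_β, L^tab_β), and there exists a partition B_1^min,...,B_ν^min of the batch ballots with |B_g^min| = S_g. If a group G is selected with probability S_G/S_β and the observed value is ((W^cvr_G − L^cvr_G) − (W^act_G − L^act_G))/S_G where W^act_G, L^act_G are the actual vote totals of B_G^min, then the expectation of the observed value equals D_β/S_β, the normalized batch discrepancy. -/
/-- Group comparison audit: if batch `β` is partitioned into `ν` groups whose declared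
sizes sum to the batch size and whose declared totals sum to the tabulated totals, and a
group `G` is selected with probability `S G / S_β` with observed value
`((W^cvr_G − L^cvr_G) − (W^act_G − L^act_G)) / S G`, then the expectation of the observed
value equals `D_β / S_β`. -/
theorem group_comparison_expectation
    {Ballot : Type*} [DecidableEq Ballot] (ν : ℕ)
    (Bg : Fin ν → Finset Ballot)
    (hdisj : ∀ i j, i ≠ j → Disjoint (Bg i) (Bg j))
    (S : Fin ν → ℕ) (hSpos : ∀ g, 0 < S g) (hcard : ∀ g, (Bg g).card = S g)
    (W L : Ballot → ℤ)
    (hW : ∀ b, W b ∈ ({0, 1} : Set ℤ)) (hL : ∀ b, L b ∈ ({0, 1} : Set ℤ))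
    (Wc Lc : Fin ν → ℤ) (Wtab Ltab : ℤ)
    (hWtot : ∑ g, Wc g = Wtab) (hLtot : ∑ g, Lc g = Ltab)
    (Sβ : ℕ) (hSβ : Sβ = ∑ g, S g)
    (Dβ : ℤ)
    (hDβ : Dβ = (Wtab - Ltab) - ∑ b ∈ Finset.univ.biUnion Bg, (W b - L b))
    (v : Fin ν → ℝ)
    (hv : ∀ g, v g =
      (((Wc g - Lc g : ℤ) : ℝ) - ((∑ b ∈ Bg g, (W b - L b) : ℤ) : ℝ)) / (S g : ℝ)) :
    ∑ g, ((S g : ℝ) / (Sβ : ℝ)) * v g = (Dβ : ℝ) / (Sβ : ℝ) := by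
  have hsum : ∑ b ∈ Finset.univ.biUnion Bg, (W b - L b)
      = ∑ g, ∑ b ∈ Bg g, (W b - L b) :=
    Finset.sum_biUnion (fun i _ j _ hij => hdisj i j hij)
  have key : ∀ g : Fin ν, ((S g : ℝ) / (Sβ : ℝ)) * v g =
      (((Wc g - Lc g : ℤ) : ℝ) - ((∑ b ∈ Bg g, (W b - L b) : ℤ) : ℝ)) / (Sβ : ℝ) := by
    intro g
    rw [hv g]
    have hS : (S g : ℝ) ≠ 0 := Nat.cast_ne_zero.mpr (hSpos g).ne'
    rw [div_mul_div_comm, mul_comm (Sβ:ℝ), mul_div_mul_left _ _ hS]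
  rw [Finset.sum_congr rfl (fun g _ => key g), ← Finset.sum_div]
  congr 1
  push_cast [hDβ, hsum, ← hWtot, ← hLtot]
  rw [← Finset.sum_sub_distrib, ← Finset.sum_sub_distrib]
end

section
/- The Force transform T_Force, given a ballot manifest with batch size S^act_β and tabulated totals (W^tab_β, L^tab_β) with W^tab_β ≤ S^act_β and L^tab_β ≤ S^act_β, always outputs a uniquely-labeled CVR of size exactly S^act_β whose declared totals equal W^tab_β and L^tab_β. -/
/-!
Relabelling keeps identifiers distinct because its counter starts above every fresh symbol `⊥_m`
of the input and grows by one per relabelled row, so every symbol it emits is below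
`fresh0 + cvr.length`; the padding symbols start at `fresh0 + S`, which is above all of these whenever
padding happens at all. Each column is adjusted by flipping only entries of the wrong value, so a
column of length `S` can be driven to any total `t ≤ S` without changing its length.
-/

/-- A CVR row: an identifier (either an original identifier in `I` or a fresh symbol
`⊥_t` indexed by `ℕ`), a winner-vote entry and a loser-vote entry (overvotes allowed). -/
abbrev CVRRow (I : Type*) := (I ⊕ ℕ) × Bool × Bool

/-- Step 1 of `T_Force`: replace duplicate identifiers with fresh unused symbols `⊥_n`. -/
def dedupRows {I : Type*} [DecidableEq (I ⊕ ℕ)]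
    (seen : List (I ⊕ ℕ)) (n : ℕ) : List (CVRRow I) → List (CVRRow I)
  | [] => []
  | (i, w, l) :: rest =>
    if i ∈ seen then (Sum.inr n, w, l) :: dedupRows (Sum.inr n :: seen) (n + 1) rest
    else (i, w, l) :: dedupRows (i :: seen) n rest

/-- Flip (from the front of the list) `k` entries that differ from `b` to the value `b`. -/
def flipTo (b : Bool) : ℕ → List Bool → List Bool
  | _, [] => []
  | 0, xs => xs
  | k + 1, x :: xs => if x = b then x :: flipTo b (k + 1) xs else b :: flipTo b k xs

/-- Steps 3/4 of `T_Force`: flip vote entries of trailing rows until the column has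
exactly `target` votes. -/
def adjustCol (col : List Bool) (target : ℕ) : List Bool :=
  let c := col.count true
  if c ≤ target then (flipTo true (target - c) col.reverse).reverse
  else (flipTo false (c - target) col.reverse).reverse

/-- The Force transform `T_Force`: (1) relabel duplicate identifiers with fresh unused
symbols, (2) pad with fresh all-zero rows or truncate to reach size `S`, (3) adjust the
winner column to total `Wtab`, (4) adjust the loser column to total `Ltab`. -/
def forceCVR {I : Type*} [DecidableEq I] (S Wtab Ltab : ℕ)
    (cvr : List (CVRRow I)) : List (CVRRow I) :=
  let fresh0 : ℕ :=
    (cvr.filterMap (fun r => match r.1 with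
      | Sum.inr n => some n
      | Sum.inl _ => none)).foldr max 0 + 1
  let l1 := dedupRows [] fresh0 cvr
  let l2 := l1.take S ++
    (List.range (S - l1.length)).map
      (fun t => ((Sum.inr (fresh0 + S + t) : I ⊕ ℕ), false, false))
  let wcol := adjustCol (l2.map (fun r => r.2.1)) Wtab
  let lcol := adjustCol (l2.map (fun r => r.2.2)) Ltab
  (l2.map (fun r => r.1)).zip (wcol.zip lcol)

open List

section Columns

theorem flipTo_length (b : Bool) (k : ℕ) (xs : List Bool) :
    (flipTo b k xs).length = xs.length := by
  induction xs generalizing k with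
  | nil => cases k <;> rfl
  | cons x xs ih =>
    cases k with
    | zero => rfl
    | succ k => simp only [flipTo]; split <;> simp [ih]

theorem flipTo_count (b : Bool) (k : ℕ) (xs : List Bool) :
    (flipTo b k xs).count b = xs.count b + min k (xs.count (!b)) := by
  induction xs generalizing k with
  | nil => cases k <;> simp [flipTo]
  | cons x xs ih =>
    cases k with
    | zero => simp [flipTo]
    | succ k =>
      obtain rfl | rfl : x = b ∨ x = !b := by cases x <;> cases b <;> simp
      all_goals grind [flipTo]

theorem adjustCol_length (col : List Bool) (t : ℕ) :
    (adjustCol col t).length = col.length := by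
  unfold adjustCol
  dsimp only
  split <;> simp [flipTo_length]

theorem adjustCol_count_true (col : List Bool) {t : ℕ} (ht : t ≤ col.length) :
    (adjustCol col t).count true = t := by
  have hcol := count_true_add_count_false col
  unfold adjustCol
  dsimp only
  split
  · have := flipTo_count true (t - col.count true) col.reverse
    simp only [count_reverse, Bool.not_true] at this ⊢
    omega
  · have hflip := flipTo_count false (col.count true - t) col.reverse
    have hsum := count_true_add_count_false (flipTo false (col.count true - t) col.reverse)
    simp only [count_reverse, Bool.not_false, flipTo_length, length_reverse] at hflip hsum ⊢
    omega

end Columns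

section Dedup

variable {I : Type*} [DecidableEq (I ⊕ ℕ)]

theorem dedupRows_length (seen : List (I ⊕ ℕ)) (n : ℕ) (rows : List (CVRRow I)) :
    (dedupRows seen n rows).length = rows.length := by
  induction rows generalizing seen n with
  | nil => rfl
  | cons r rest ih => obtain ⟨i, w, l⟩ := r; simp only [dedupRows]; split <;> simp [ih]

theorem lt_of_mem_dedupRows {seen : List (I ⊕ ℕ)} {n : ℕ} {rows : List (CVRRow I)}
    (hrows : ∀ m, Sum.inr m ∈ rows.map Prod.fst → m < n) {m : ℕ}
    (hm : Sum.inr m ∈ (dedupRows seen n rows).map Prod.fst) : m < n + rows.length := by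
  induction rows generalizing seen n with
  | nil => simp [dedupRows] at hm
  | cons r rest ih =>
    obtain ⟨i, w, l⟩ := r
    have hrest m (h : Sum.inr m ∈ rest.map Prod.fst) : m < n := hrows m (by simp [h])
    rw [length_cons]
    simp only [dedupRows] at hm
    split at hm <;> rw [map_cons, mem_cons] at hm
    · rcases hm with hm | hm
      · cases hm; omega
      · have := ih (fun m' hm' => (hrest m' hm').trans n.lt_succ_self) hm
        omega
    · rcases hm with rfl | hm
      · have := hrows m (by simp); omega
      · have := ih hrest hm
        omega

theorem nodup_map_fst_dedupRows_append {seen : List (I ⊕ ℕ)} {n : ℕ} {rows : List (CVRRow I)}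
    (hseen : seen.Nodup) (hseen_lt : ∀ m, Sum.inr m ∈ seen → m < n)
    (hrows : ∀ m, Sum.inr m ∈ rows.map Prod.fst → m < n) :
    ((dedupRows seen n rows).map Prod.fst ++ seen).Nodup := by
  induction rows generalizing seen n with
  | nil => simpa [dedupRows]
  | cons r rest ih =>
    obtain ⟨i, w, l⟩ := r
    have hrest m (h : Sum.inr m ∈ rest.map Prod.fst) : m < n := hrows m (by simp [h])
    simp only [dedupRows]
    split
    case isTrue hi =>
      have hn : Sum.inr n ∉ seen := fun h => (hseen_lt n h).false
      refine perm_middle.nodup_iff.mp (ih (hseen.cons hn) ?_ ?_)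
      · rintro m (_ | ⟨_, hm⟩)
        exacts [n.lt_succ_self, (hseen_lt m hm).trans n.lt_succ_self]
      · exact fun m hm => (hrest m hm).trans n.lt_succ_self
    case isFalse hi =>
      refine perm_middle.nodup_iff.mp (ih (hseen.cons hi) ?_ hrest)
      rintro m (_ | ⟨_, hm⟩)
      exacts [hrows m (by simp), hseen_lt m hm]

end Dedup

theorem countP_eq_count_true_map {α : Type*} (p : α → Bool) (l : List α) :
    l.countP p = (l.map p).count true := by
  simp [count_eq_countP, countP_map, Function.comp_def]

section Force

variable {I : Type*}

def freshStart (cvr : List (CVRRow I)) : ℕ :=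
  (cvr.filterMap (fun r => match r.1 with
    | Sum.inr n => some n
    | Sum.inl _ => none)).foldr max 0 + 1

def padOrTruncate (S F : ℕ) (l : List (CVRRow I)) : List (CVRRow I) :=
  l.take S ++ (List.range (S - l.length)).map
    (fun t => ((Sum.inr (F + S + t) : I ⊕ ℕ), false, false))

def forceTotals (Wtab Ltab : ℕ) (l : List (CVRRow I)) : List (CVRRow I) :=
  (l.map (fun r => r.1)).zip
    ((adjustCol (l.map (fun r => r.2.1)) Wtab).zip (adjustCol (l.map (fun r => r.2.2)) Ltab))

theorem forceCVR_eq_forceTotals [DecidableEq I] (S Wtab Ltab : ℕ) (cvr : List (CVRRow I)) :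
    forceCVR S Wtab Ltab cvr =
      forceTotals Wtab Ltab
        (padOrTruncate S (freshStart cvr) (dedupRows [] (freshStart cvr) cvr)) :=
  rfl

theorem lt_freshStart {cvr : List (CVRRow I)} {m : ℕ} (hm : Sum.inr m ∈ cvr.map Prod.fst) :
    m < freshStart cvr := by
  obtain ⟨r, hr, hrm⟩ := mem_map.mp hm
  have hmem : m ∈ cvr.filterMap (fun r => match r.1 with
      | Sum.inr n => some n
      | Sum.inl _ => none) := mem_filterMap.mpr ⟨r, hr, by rw [hrm]⟩
  exact Nat.lt_succ_of_le (le_max_of_le' 0 hmem le_rfl)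

theorem length_padOrTruncate (S F : ℕ) (l : List (CVRRow I)) :
    (padOrTruncate S F l).length = S := by
  simp only [padOrTruncate, length_append, length_take, length_map, length_range]
  omega

theorem nodup_map_fst_padOrTruncate (S F : ℕ) {l : List (CVRRow I)}
    (hl : (l.map Prod.fst).Nodup) (hlt : ∀ m, Sum.inr m ∈ l.map Prod.fst → m < F + l.length) :
    ((padOrTruncate S F l).map Prod.fst).Nodup := by
  simp only [padOrTruncate, map_append, map_take, map_map, nodup_append]
  refine ⟨(take_sublist _ _).nodup hl, nodup_range.map fun a b hab => ?_, ?_⟩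
  · simpa using hab
  · intro x hx y hy hxy
    obtain ⟨t, ht, rfl⟩ := by simpa using hy
    subst hxy
    have := hlt _ (mem_of_mem_take hx)
    omega

theorem length_forceTotals (Wtab Ltab : ℕ) (l : List (CVRRow I)) :
    (forceTotals Wtab Ltab l).length = l.length := by
  simp [forceTotals, adjustCol_length]

theorem map_fst_forceTotals (Wtab Ltab : ℕ) (l : List (CVRRow I)) :
    (forceTotals Wtab Ltab l).map Prod.fst = l.map Prod.fst :=
  map_fst_zip (by simp [adjustCol_length])

theorem map_snd_forceTotals (Wtab Ltab : ℕ) (l : List (CVRRow I)) :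
    (forceTotals Wtab Ltab l).map Prod.snd =
      (adjustCol (l.map (fun r => r.2.1)) Wtab).zip (adjustCol (l.map (fun r => r.2.2)) Ltab) :=
  map_snd_zip (by simp [adjustCol_length])

theorem map_winner_forceTotals (Wtab Ltab : ℕ) (l : List (CVRRow I)) :
    (forceTotals Wtab Ltab l).map (fun r => r.2.1) = adjustCol (l.map (fun r => r.2.1)) Wtab :=
  calc _ = ((forceTotals Wtab Ltab l).map Prod.snd).map Prod.fst := map_map.symm
    _ = _ := by rw [map_snd_forceTotals]; exact map_fst_zip (by simp [adjustCol_length])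

theorem map_loser_forceTotals (Wtab Ltab : ℕ) (l : List (CVRRow I)) :
    (forceTotals Wtab Ltab l).map (fun r => r.2.2) = adjustCol (l.map (fun r => r.2.2)) Ltab :=
  calc _ = ((forceTotals Wtab Ltab l).map Prod.snd).map Prod.snd := map_map.symm
    _ = _ := by rw [map_snd_forceTotals]; exact map_snd_zip (by simp [adjustCol_length])

theorem countP_winner_forceTotals {Wtab : ℕ} (Ltab : ℕ) {l : List (CVRRow I)}
    (hW : Wtab ≤ l.length) : (forceTotals Wtab Ltab l).countP (fun r => r.2.1) = Wtab := by
  rw [countP_eq_count_true_map, map_winner_forceTotals]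
  exact adjustCol_count_true _ (by simpa using hW)

theorem countP_loser_forceTotals (Wtab : ℕ) {Ltab : ℕ} {l : List (CVRRow I)}
    (hL : Ltab ≤ l.length) : (forceTotals Wtab Ltab l).countP (fun r => r.2.2) = Ltab := by
  rw [countP_eq_count_true_map, map_loser_forceTotals]
  exact adjustCol_count_true _ (by simpa using hL)

end Force

/-- `T_Force` always outputs a uniquely-labeled CVR of size exactly `S^act_β` whose
declared totals equal `W^tab_β` and `L^tab_β`, provided `W^tab_β ≤ S^act_β` and
`L^tab_β ≤ S^act_β`. -/
theorem forceCVR_spec {I : Type*} [DecidableEq I]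
    (S Wtab Ltab : ℕ) (hW : Wtab ≤ S) (hL : Ltab ≤ S)
    (cvr : List (CVRRow I)) :
    (forceCVR S Wtab Ltab cvr).length = S ∧
    ((forceCVR S Wtab Ltab cvr).map Prod.fst).Nodup ∧
    ((forceCVR S Wtab Ltab cvr).countP (fun r => r.2.1)) = Wtab ∧
    ((forceCVR S Wtab Ltab cvr).countP (fun r => r.2.2)) = Ltab := by
  set F := freshStart cvr
  set deduped := dedupRows [] F cvr
  have hpad := length_padOrTruncate S F deduped
  have hdedup : (deduped.map Prod.fst).Nodup := by
    simpa using nodup_map_fst_dedupRows_append nodup_nil (by simp) fun m => lt_freshStart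
  have hlt m (hm : Sum.inr m ∈ deduped.map Prod.fst) : m < F + deduped.length := by
    rw [dedupRows_length]; exact lt_of_mem_dedupRows (fun m => lt_freshStart) hm
  rw [forceCVR_eq_forceTotals, length_forceTotals, map_fst_forceTotals]
  exact ⟨hpad, nodup_map_fst_padOrTruncate S F hdedup hlt,
    countP_winner_forceTotals _ (hW.trans_eq hpad.symm),
    countP_loser_forceTotals _ (hL.trans_eq hpad.symm)⟩
end
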